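/- Let d ∈ 2ℕ and let Y ∈ ℓ₂(ℤ₊^{d/2} × ℤ₊^{d/2}) be such that both Y*Y and YY* are rapidly decreasing double sequences. Then Y itself is rapidly decreasing. Specifically, |y_{k,l}|² ≤ a_{l,l}^{1/2} b_{k,k}^{1/2} where Y*Y = (a_{k,l}) and YY* = (b_{k,l}). -/

import Mathlib

/-! Because `a_{ll} = ∑_j |y_{jl}|²` and `b_{kk} = ∑_j |y_{kj}|²`, each `|y_{kl}|²` is bounded by
both diagonal entries, hence by their geometric mean. The weighted sum defining `r_m(Y)²` is
then dominated by the product of the two diagonal sums `∑_l (|l|+1)^{2m} a_{ll}^{1/2}` and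
`∑_k (|k|+1)^{2m} b_{kk}^{1/2}`. Such a sum is finite: its diagonal term alone shows
`(|l|+1)^{4M} |a_{ll}|² ≤ r_M(a)²`, so with `M = 2m + 2n` (`n = d/2`) the summand is at most
`r_M(a)^{1/2} (|l|+1)^{-2n} ≤ r_M(a)^{1/2} ∏_i (l_i+1)^{-2}`, and the last product is summable
over `ℕⁿ`. -/

open scoped ENNReal ComplexConjugate

/-- The index set `ℤ₊^{d/2}`. -/
abbrev Idx (d : ℕ) := Fin (d / 2) → ℕ

/-- The seminorm `r_m(a) = (Σ_{k,l} (|k|+1)^{2m} (|l|+1)^{2m} |a_{k,l}|²)^{1/2}`. -/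
noncomputable def rsem (d m : ℕ) (a : Idx d → Idx d → ℂ) : ℝ≥0∞ :=
  (∑' k : Idx d, ∑' l : Idx d,
      ((∑ i, (k i : ℝ≥0∞)) + 1) ^ (2 * m) * ((∑ i, (l i : ℝ≥0∞)) + 1) ^ (2 * m) *
        (‖a k l‖₊ : ℝ≥0∞) ^ 2) ^ (1 / 2 : ℝ)

/-- A double sequence is rapidly decreasing if all seminorms `r_m` are finite. -/
def RapidlyDecreasing (d : ℕ) (a : Idx d → Idx d → ℂ) : Prop :=
  ∀ m : ℕ, rsem d m a < ⊤

open scoped NNReal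

namespace ENNReal

theorem tsum_fin_pi_prod {α : Type*} (f : α → ℝ≥0∞) :
    ∀ n : ℕ, ∑' x : Fin n → α, ∏ i, f (x i) = (∑' a, f a) ^ n
  | 0 => by simp
  | n + 1 => by
    rw [← (Fin.consEquiv fun _ : Fin (n + 1) => α).tsum_eq, ENNReal.tsum_prod']
    simp only [Fin.consEquiv_apply, Fin.prod_univ_succ, Fin.cons_zero, Fin.cons_succ,
      ENNReal.tsum_mul_left, ENNReal.tsum_mul_right, tsum_fin_pi_prod f n, pow_succ']

theorem tsum_inv_natCast_add_one_sq_ne_top : ∑' j : ℕ, (((j : ℝ≥0∞) + 1) ^ 2)⁻¹ ≠ ∞ := by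
  have hs : Summable fun j : ℕ => (((j : ℝ≥0) + 1) ^ 2)⁻¹ := by
    rw [← NNReal.summable_coe]
    push_cast
    simpa [one_div] using
      (summable_nat_add_iff 1).2 (Real.summable_one_div_nat_pow.2 (by norm_num : 1 < 2))
  simpa using ENNReal.tsum_coe_ne_top_iff_summable.2 hs

theorem le_rpow_half_mul_rpow_half {x a b : ℝ≥0∞} (ha : x ≤ a) (hb : x ≤ b) :
    x ≤ a ^ (1 / 2 : ℝ) * b ^ (1 / 2 : ℝ) :=
  calc x = x ^ (1 / 2 : ℝ) * x ^ (1 / 2 : ℝ) := by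
        rw [← ENNReal.rpow_add_of_nonneg _ _ (by norm_num) (by norm_num)]; norm_num
    _ ≤ a ^ (1 / 2 : ℝ) * b ^ (1 / 2 : ℝ) := by gcongr

end ENNReal

noncomputable def weight {n : ℕ} (l : Fin n → ℕ) : ℝ≥0∞ := (∑ i, (l i : ℝ≥0∞)) + 1

theorem weight_ne_zero {n : ℕ} (l : Fin n → ℕ) : weight l ≠ 0 := by simp [weight]

theorem weight_ne_top {n : ℕ} (l : Fin n → ℕ) : weight l ≠ ∞ := by simp [weight]

theorem natCast_add_one_le_weight {n : ℕ} (l : Fin n → ℕ) (i : Fin n) :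
    (l i : ℝ≥0∞) + 1 ≤ weight l :=
  add_le_add_left
    (Finset.single_le_sum (f := fun i => (l i : ℝ≥0∞)) (fun _ _ => zero_le) (Finset.mem_univ i)) 1

theorem tsum_inv_weight_pow_ne_top (n : ℕ) : ∑' l : Fin n → ℕ, (weight l ^ (2 * n))⁻¹ ≠ ∞ := by
  have hle : ∀ l : Fin n → ℕ, (weight l ^ (2 * n))⁻¹ ≤ ∏ i, (((l i : ℝ≥0∞) + 1) ^ 2)⁻¹ := by
    intro l
    rw [← ENNReal.prod_inv_distrib (fun i _ j _ _ => Or.inr (by simp)), ENNReal.inv_le_inv,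
      pow_mul]
    calc ∏ i, ((l i : ℝ≥0∞) + 1) ^ 2 ≤ ∏ _i : Fin n, weight l ^ 2 := by
          gcongr with i; exact natCast_add_one_le_weight l i
      _ = (weight l ^ 2) ^ n := by simp
  refine ne_top_of_le_ne_top ?_ (ENNReal.tsum_le_tsum hle)
  rw [ENNReal.tsum_fin_pi_prod (fun j : ℕ => (((j : ℝ≥0∞) + 1) ^ 2)⁻¹)]
  exact ENNReal.pow_ne_top ENNReal.tsum_inv_natCast_add_one_sq_ne_top

noncomputable def rsemSq (d m : ℕ) (a : Idx d → Idx d → ℂ) : ℝ≥0∞ :=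
  ∑' k : Idx d, ∑' l : Idx d, weight k ^ (2 * m) * weight l ^ (2 * m) * (‖a k l‖₊ : ℝ≥0∞) ^ 2

theorem rsem_lt_top_iff (d m : ℕ) (a : Idx d → Idx d → ℂ) : rsem d m a < ∞ ↔ rsemSq d m a < ∞ :=
  ENNReal.rpow_lt_top_iff_of_pos (by norm_num)

theorem rsemSq_zero (d : ℕ) (a : Idx d → Idx d → ℂ) :
    rsemSq d 0 a = ∑' k : Idx d, ∑' l : Idx d, (‖a k l‖₊ : ℝ≥0∞) ^ 2 := by
  simp [rsemSq]

theorem weight_pow_mul_rpow_diag_le (d m : ℕ) (c : Idx d → Idx d → ℂ) (l : Idx d) :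
    weight l ^ m * (‖c l l‖₊ : ℝ≥0∞) ^ (1 / 2 : ℝ) ≤ rsemSq d m c ^ (1 / 4 : ℝ) := by
  have hdiag : weight l ^ (2 * m) * weight l ^ (2 * m) * (‖c l l‖₊ : ℝ≥0∞) ^ 2 ≤ rsemSq d m c :=
    (ENNReal.le_tsum l).trans (ENNReal.le_tsum (f := fun k => ∑' l' : Idx d, _) l)
  rw [← ENNReal.pow_le_pow_left_iff (by norm_num : 4 ≠ 0)]
  convert hdiag using 1
  · rw [mul_pow, ← ENNReal.rpow_natCast (_ ^ (1 / 2 : ℝ)), ← ENNReal.rpow_mul]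
    norm_num
    ring
  · rw [← ENNReal.rpow_natCast, ← ENNReal.rpow_mul]
    norm_num

theorem RapidlyDecreasing.tsum_weight_pow_mul_rpow_diag_ne_top {d : ℕ} {c : Idx d → Idx d → ℂ}
    (hc : RapidlyDecreasing d c) (m : ℕ) :
    ∑' l : Idx d, weight l ^ m * (‖c l l‖₊ : ℝ≥0∞) ^ (1 / 2 : ℝ) ≠ ∞ := by
  set n := d / 2
  have hS : rsemSq d (m + 2 * n) c ^ (1 / 4 : ℝ) ≠ ∞ :=
    ENNReal.rpow_ne_top_of_nonneg (by norm_num) ((rsem_lt_top_iff _ _ _).1 (hc _)).ne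
  have hle : ∀ l : Idx d, weight l ^ m * (‖c l l‖₊ : ℝ≥0∞) ^ (1 / 2 : ℝ)
      ≤ (weight l ^ (2 * n))⁻¹ * rsemSq d (m + 2 * n) c ^ (1 / 4 : ℝ) := by
    intro l
    rw [← ENNReal.mul_le_iff_le_inv (pow_ne_zero _ (weight_ne_zero l))
      (ENNReal.pow_ne_top (weight_ne_top l)), ← mul_assoc, ← pow_add, add_comm]
    exact weight_pow_mul_rpow_diag_le d (m + 2 * n) c l
  refine ne_top_of_le_ne_top ?_ (ENNReal.tsum_le_tsum hle)
  rw [ENNReal.tsum_mul_right]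
  exact ENNReal.mul_ne_top (tsum_inv_weight_pow_ne_top n) hS

theorem nnnorm_tsum_conj_mul_self {ι : Type*} (f : ι → ℂ) :
    ‖∑' j, conj (f j) * f j‖₊ = ∑' j, ‖f j‖₊ ^ 2 := by
  ext
  simp_rw [NNReal.coe_tsum, NNReal.coe_pow, coe_nnnorm, Complex.conj_mul', ← Complex.ofReal_pow,
    ← Complex.ofReal_tsum, Complex.norm_real,
    Real.norm_of_nonneg (tsum_nonneg fun _ => sq_nonneg _)]

theorem coe_nnnorm_sq_le_nnnorm_tsum_conj_mul_self {ι : Type*} (f : ι → ℂ)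
    (hf : ∑' j, (‖f j‖₊ : ℝ≥0∞) ^ 2 ≠ ∞) (k : ι) :
    (‖f k‖₊ : ℝ≥0∞) ^ 2 ≤ ‖∑' j, conj (f j) * f j‖₊ := by
  have hs : Summable fun j => ‖f j‖₊ ^ 2 :=
    ENNReal.tsum_coe_ne_top_iff_summable.1 (by simpa using hf)
  rw [nnnorm_tsum_conj_mul_self, ENNReal.coe_tsum hs]
  exact_mod_cast ENNReal.le_tsum (f := fun j => ((‖f j‖₊ ^ (2 : ℕ) : ℝ≥0) : ℝ≥0∞)) k

theorem rsemSq_le_of_le {d : ℕ} (m : ℕ) {y : Idx d → Idx d → ℂ} {p q : Idx d → ℝ≥0∞}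
    (h : ∀ k l, (‖y k l‖₊ : ℝ≥0∞) ^ 2 ≤ p l * q k) :
    rsemSq d m y ≤ (∑' k, weight k ^ (2 * m) * q k) * ∑' l, weight l ^ (2 * m) * p l := by
  simp_rw [← ENNReal.tsum_mul_right, ← ENNReal.tsum_mul_left]
  refine ENNReal.tsum_le_tsum fun k => ENNReal.tsum_le_tsum fun l => ?_
  calc weight k ^ (2 * m) * weight l ^ (2 * m) * (‖y k l‖₊ : ℝ≥0∞) ^ 2
      ≤ weight k ^ (2 * m) * weight l ^ (2 * m) * (p l * q k) := by gcongr; exact h k l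
    _ = weight k ^ (2 * m) * q k * (weight l ^ (2 * m) * p l) := by ring

theorem tsum_sq_ne_top_of_rsem_zero_ne_top {d : ℕ} {y : Idx d → Idx d → ℂ}
    (hy : rsem d 0 y ≠ ∞) : ∑' k, ∑' l, (‖y k l‖₊ : ℝ≥0∞) ^ 2 ≠ ∞ := by
  rw [← rsemSq_zero, ← lt_top_iff_ne_top, ← rsem_lt_top_iff]
  exact hy.lt_top

theorem stmt9_general (d : ℕ)
    (y : Idx d → Idx d → ℂ)
    (hy2 : rsem d 0 y ≠ ⊤)
    (a b : Idx d → Idx d → ℂ)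
    (hadef : ∀ k l, a k l = ∑' j : Idx d, conj (y j k) * y j l)
    (hbdef : ∀ k l, b k l = ∑' j : Idx d, y k j * conj (y l j))
    (ha : RapidlyDecreasing d a) (hb : RapidlyDecreasing d b) :
    RapidlyDecreasing d y ∧
      ∀ k l, (‖y k l‖₊ : ℝ≥0∞) ^ 2
        ≤ (‖a l l‖₊ : ℝ≥0∞) ^ (1 / 2 : ℝ) * (‖b k k‖₊ : ℝ≥0∞) ^ (1 / 2 : ℝ) := by
  have hy := tsum_sq_ne_top_of_rsem_zero_ne_top hy2
  have hcol : ∀ k l, (‖y k l‖₊ : ℝ≥0∞) ^ 2 ≤ ‖a l l‖₊ := fun k l => by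
    rw [hadef]
    exact coe_nnnorm_sq_le_nnnorm_tsum_conj_mul_self (y · l)
      (ne_top_of_le_ne_top hy (ENNReal.tsum_le_tsum fun j => ENNReal.le_tsum l)) k
  have hrow : ∀ k l, (‖y k l‖₊ : ℝ≥0∞) ^ 2 ≤ ‖b k k‖₊ := fun k l => by
    rw [hbdef]
    simp_rw [mul_comm (y k _)]
    exact coe_nnnorm_sq_le_nnnorm_tsum_conj_mul_self (y k)
      (ne_top_of_le_ne_top hy (ENNReal.le_tsum k)) l
  have hyab : ∀ k l, (‖y k l‖₊ : ℝ≥0∞) ^ 2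
      ≤ (‖a l l‖₊ : ℝ≥0∞) ^ (1 / 2 : ℝ) * (‖b k k‖₊ : ℝ≥0∞) ^ (1 / 2 : ℝ) :=
    fun k l => ENNReal.le_rpow_half_mul_rpow_half (hcol k l) (hrow k l)
  refine ⟨fun m => ?_, hyab⟩
  rw [rsem_lt_top_iff]
  exact (rsemSq_le_of_le m hyab).trans_lt <| ENNReal.mul_lt_top
    (hb.tsum_weight_pow_mul_rpow_diag_ne_top _).lt_top
    (ha.tsum_weight_pow_mul_rpow_diag_ne_top _).lt_top

/-- Let `Y ∈ ℓ₂(ℤ₊^{d/2} × ℤ₊^{d/2})` be such that both `Y*Y` and `YY*` are rapidly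
decreasing.  Then `Y` itself is rapidly decreasing, and moreover
`|y_{k,l}|² ≤ a_{l,l}^{1/2} b_{k,k}^{1/2}` where `a = Y*Y` and `b = YY*`. -/
theorem stmt9 (d : ℕ) (hd : 0 < d) (hde : Even d)
    (y : Idx d → Idx d → ℂ)
    (hy2 : rsem d 0 y ≠ ⊤)
    (a b : Idx d → Idx d → ℂ)
    (hadef : ∀ k l, a k l = ∑' j : Idx d, conj (y j k) * y j l)
    (hbdef : ∀ k l, b k l = ∑' j : Idx d, y k j * conj (y l j))
    (ha : RapidlyDecreasing d a) (hb : RapidlyDecreasing d b) :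
    RapidlyDecreasing d y ∧
      ∀ k l, (‖y k l‖₊ : ℝ≥0∞) ^ 2
        ≤ (‖a l l‖₊ : ℝ≥0∞) ^ (1 / 2 : ℝ) * (‖b k k‖₊ : ℝ≥0∞) ^ (1 / 2 : ℝ) :=
  stmt9_general d y hy2 a b hadef hbdef ha hb
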